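/- arXiv:2312.04283 — 2 statements merged into one kernel-verified Lean document; each statement's English description precedes it below -/
import Mathlib

section
/- If β_F(E) := -d/dE ln ρ(E) is a completely monotone function on (0,∞) (i.e. (-1)^n β_F^{(n)}(E) ≥ 0 for all n ≥ 0 and all E > 0), and ρ is positive and smooth, then ρ is also completely monotone on (0,∞). -/
open Set

private def SS : Set ℝ := Set.Ioi 0

private lemma SS_open : IsOpen SS := isOpen_Ioi
private lemma SS_ud : UniqueDiffOn ℝ SS := SS_open.uniqueDiffOn

/-- completely monotone on `(0,∞)` (within-derivative version). -/
private def CMon (f : ℝ → ℝ) : Prop :=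
  ContDiffOn ℝ (⊤ : ℕ∞) f SS ∧
    ∀ (n : ℕ), ∀ x ∈ SS, 0 ≤ (-1:ℝ)^n * iteratedDerivWithin n f SS x

private lemma itD_open {f : ℝ → ℝ} {x : ℝ} (hx : x ∈ SS) (n : ℕ) :
    iteratedDerivWithin n f SS x = iteratedDeriv n f x := by
  simp only [iteratedDerivWithin, iteratedDeriv,
    iteratedFDerivWithin_of_isOpen n SS_open hx]

private lemma CMon.negDeriv {f : ℝ → ℝ} (hf : CMon f) :
    CMon (fun x => -derivWithin f SS x) := by
  constructor
  · exact (hf.1.derivWithin SS_ud (by simp)).neg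
  · intro n x hx
    rw [iteratedDerivWithin_fun_neg, ← iteratedDerivWithin_succ']
    have := hf.2 (n+1) x hx
    have hsign : (-1:ℝ)^n * -iteratedDerivWithin (n+1) f SS x
        = (-1:ℝ)^(n+1) * iteratedDerivWithin (n+1) f SS x := by ring
    rw [hsign]; exact this

private lemma CMon.add {f g : ℝ → ℝ} (hf : CMon f) (hg : CMon g) :
    CMon (fun x => f x + g x) := by
  constructor
  · exact hf.1.add hg.1
  · intro n x hx
    have : iteratedDerivWithin n (f + g) SS x
        = iteratedDerivWithin n f SS x + iteratedDerivWithin n g SS x :=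
      iteratedDerivWithin_add hx SS_ud ((hf.1 x hx).of_le (by exact_mod_cast (le_top : (n:ℕ∞) ≤ ⊤))) ((hg.1 x hx).of_le (by exact_mod_cast (le_top : (n:ℕ∞) ≤ ⊤)))
    show 0 ≤ (-1:ℝ)^n * iteratedDerivWithin n (f + g) SS x
    rw [this, mul_add]
    exact add_nonneg (hf.2 n x hx) (hg.2 n x hx)

private lemma cmon_mul_aux : ∀ (n : ℕ) (f g : ℝ → ℝ), CMon f → CMon g →
    ∀ x ∈ SS, 0 ≤ (-1:ℝ)^n * iteratedDerivWithin n (fun y => f y * g y) SS x := by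
  intro n
  induction n with
  | zero =>
    intro f g hf hg x hx
    simpa using mul_nonneg (by simpa using hf.2 0 x hx) (by simpa using hg.2 0 x hx)
  | succ n IH =>
    intro f g hf hg x hx
    have hF' : CMon (fun y => -derivWithin f SS y) := hf.negDeriv
    have hG' : CMon (fun y => -derivWithin g SS y) := hg.negDeriv
    have heq : Set.EqOn (derivWithin (fun y => f y * g y) SS)
        (fun y => -(((fun z => -derivWithin f SS z) y * g y)
          + (f y * (fun z => -derivWithin g SS z) y))) SS := by
      intro y hy
      rw [derivWithin_fun_mul
        (hf.1.differentiableOn (by simp) y hy) (hg.1.differentiableOn (by simp) y hy)]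
      ring
    rw [iteratedDerivWithin_succ',
      iteratedDerivWithin_congr heq hx,
      iteratedDerivWithin_fun_neg]
    have hadd : iteratedDerivWithin n
        (fun y => ((fun z => -derivWithin f SS z) y * g y)
          + (f y * (fun z => -derivWithin g SS z) y)) SS x
        = iteratedDerivWithin n (fun y => -derivWithin f SS y * g y) SS x
          + iteratedDerivWithin n (fun y => f y * -derivWithin g SS y) SS x :=
      iteratedDerivWithin_add hx SS_ud
        (((hF'.1.mul hg.1) x hx).of_le (by exact_mod_cast (le_top : (n:ℕ∞) ≤ ⊤))) (((hf.1.mul hG'.1) x hx).of_le (by exact_mod_cast (le_top : (n:ℕ∞) ≤ ⊤)))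
    rw [hadd]
    have h1 := IH _ _ hF' hg x hx
    have h2 := IH _ _ hf hG' x hx
    have hs : (-1:ℝ)^(n+1) * -(iteratedDerivWithin n (fun y => -derivWithin f SS y * g y) SS x
        + iteratedDerivWithin n (fun y => f y * -derivWithin g SS y) SS x)
        = (-1:ℝ)^n * iteratedDerivWithin n (fun y => -derivWithin f SS y * g y) SS x
          + (-1:ℝ)^n * iteratedDerivWithin n (fun y => f y * -derivWithin g SS y) SS x := by
      rw [pow_succ]; ring
    rw [hs]
    exact add_nonneg h1 h2

private lemma CMon.mul {f g : ℝ → ℝ} (hf : CMon f) (hg : CMon g) :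
    CMon (fun x => f x * g x) :=
  ⟨hf.1.mul hg.1, fun n x hx => cmon_mul_aux n f g hf hg x hx⟩

/-- If `β_F(E) = -(d/dE) log ρ(E)` is completely monotone on `(0,∞)` and `ρ` is positive
and smooth, then `ρ` is completely monotone on `(0,∞)`. -/
theorem stmt0 (ρ βF : ℝ → ℝ)
    (hρ : ContDiff ℝ (⊤ : ℕ∞) ρ)
    (hpos : ∀ E > (0:ℝ), 0 < ρ E)
    (hβF : ∀ E, βF E = -deriv (fun x => Real.log (ρ x)) E)
    (hcm : ∀ (n : ℕ) (E : ℝ), 0 < E → 0 ≤ (-1 : ℝ)^n * iteratedDeriv n βF E) :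
    ∀ (n : ℕ) (E : ℝ), 0 < E → 0 ≤ (-1 : ℝ)^n * iteratedDeriv n ρ E := by
  have hρ' : ContDiff ℝ (⊤ : ℕ∞) ρ := hρ.of_le (by simp)
  have hdiff : Differentiable ℝ ρ := hρ'.differentiable (by simp)
  -- βF x = -(deriv ρ x / ρ x) on SS
  have hβeq : ∀ x ∈ SS, βF x = -(deriv ρ x / ρ x) := by
    intro x hx
    have hne : ρ x ≠ 0 := (hpos x hx).ne'
    have := ((hdiff x).hasDerivAt.log hne).deriv
    rw [hβF x, this]
  -- relation: deriv ρ = -(βF * ρ) on SS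
  have hrel : ∀ x ∈ SS, deriv ρ x = -(βF x * ρ x) := by
    intro x hx
    rw [hβeq x hx]
    field_simp [(hpos x hx).ne']
  -- CMon βF
  have hβcm : CMon βF := by
    constructor
    · refine ContDiffOn.congr ?_ hβeq
      exact ((((contDiff_infty_iff_deriv.mp hρ').2).contDiffOn).div (hρ'.contDiffOn)
        (fun x hx => (hpos x hx).ne')).neg
    · intro n x hx
      rw [itD_open hx n]
      exact hcm n x hx
  have hρsm : ContDiffOn ℝ (⊤ : ℕ∞) ρ SS := hρ'.contDiffOn
  -- key induction
  have key : ∀ n : ℕ, ∀ g : ℝ → ℝ, CMon g → ∀ x ∈ SS,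
      0 ≤ (-1:ℝ)^n * iteratedDerivWithin n (fun y => g y * ρ y) SS x := by
    intro n
    induction n with
    | zero =>
      intro g hg x hx
      simpa using mul_nonneg (by simpa using hg.2 0 x hx) (hpos x hx).le
    | succ n IH =>
      intro g hg x hx
      set g' : ℝ → ℝ := fun z => -derivWithin g SS z + g z * βF z with hg'def
      have hg' : CMon g' := CMon.add hg.negDeriv (hg.mul hβcm)
      have heq : Set.EqOn (derivWithin (fun y => g y * ρ y) SS)
          (fun y => -(g' y * ρ y)) SS := by
        intro y hy
        rw [derivWithin_fun_mul (hg.1.differentiableOn (by simp) y hy)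
          (hρsm.differentiableOn (by simp) y hy),
          derivWithin_of_isOpen (f := ρ) SS_open hy, hrel y hy, hg'def]
        ring
      rw [iteratedDerivWithin_succ',
        iteratedDerivWithin_congr heq hx,
        iteratedDerivWithin_fun_neg]
      have h1 := IH g' hg' x hx
      have hs : (-1:ℝ)^(n+1) * -(iteratedDerivWithin n (fun y => g' y * ρ y) SS x)
          = (-1:ℝ)^n * iteratedDerivWithin n (fun y => g' y * ρ y) SS x := by
        rw [pow_succ]; ring
      rw [hs]; exact h1
  -- CMon ρ
  have hρcm : ∀ n : ℕ, ∀ x ∈ SS, 0 ≤ (-1:ℝ)^n * iteratedDerivWithin n ρ SS x := by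
    intro n
    cases n with
    | zero => intro x hx; simpa using (hpos x hx).le
    | succ n =>
      intro x hx
      have heq : Set.EqOn (derivWithin ρ SS) (fun y => -(βF y * ρ y)) SS := by
        intro y hy
        rw [derivWithin_of_isOpen SS_open hy, hrel y hy]
      rw [iteratedDerivWithin_succ',
        iteratedDerivWithin_congr heq hx,
        iteratedDerivWithin_fun_neg]
      have h1 := key n βF hβcm x hx
      have hs : (-1:ℝ)^(n+1) * -(iteratedDerivWithin n (fun y => βF y * ρ y) SS x)
          = (-1:ℝ)^n * iteratedDerivWithin n (fun y => βF y * ρ y) SS x := by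
        rw [pow_succ]; ring
      rw [hs]; exact h1
  intro n E hE
  rw [← itD_open (f := ρ) (x := E) hE n]
  exact hρcm n E hE
end

section
/- If g : (0,∞) → ℝ is a Bernstein function (g ≥ 0 and its derivative g' is completely monotone), then E ↦ exp(-g(E)) is completely monotone on (0,∞). -/
open Finset
open scoped ContDiff

private lemma natlt (m : ℕ) : (m : WithTop ℕ∞) < ∞ := by
  exact_mod_cast WithTop.coe_lt_top _

private lemma leibniz_iteratedDeriv (f h : ℝ → ℝ) (hf : ContDiff ℝ ∞ f)
    (hh : ContDiff ℝ ∞ h) (n : ℕ) :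
    iteratedDeriv n (fun x => f x * h x) =
      fun x => ∑ k ∈ range (n + 1),
        (n.choose k : ℝ) * (iteratedDeriv k f x * iteratedDeriv (n - k) h x) := by
  induction n with
  | zero => simp [iteratedDeriv_zero]
  | succ n IH =>
    funext x
    have hdf : ∀ m : ℕ, Differentiable ℝ (iteratedDeriv m f) :=
      fun m => hf.differentiable_iteratedDeriv m (natlt m)
    have hdh : ∀ m : ℕ, Differentiable ℝ (iteratedDeriv m h) :=
      fun m => hh.differentiable_iteratedDeriv m (natlt m)
    rw [iteratedDeriv_succ, IH]
    have hterm : ∀ k : ℕ, DifferentiableAt ℝ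
        (fun y => (n.choose k : ℝ) * (iteratedDeriv k f y * iteratedDeriv (n - k) h y)) x :=
      fun k => (((hdf k) x).mul ((hdh (n - k)) x)).const_mul _
    rw [deriv_fun_sum (fun k _ => hterm k)]
    have hsum : ∀ k ∈ range (n + 1),
        deriv (fun y => (n.choose k : ℝ) * (iteratedDeriv k f y * iteratedDeriv (n - k) h y)) x
        = (n.choose k : ℝ) * (iteratedDeriv (k + 1) f x * iteratedDeriv (n - k) h x)
          + (n.choose k : ℝ) * (iteratedDeriv k f x * iteratedDeriv (n - k + 1) h x) := by
      intro k _
      rw [deriv_const_mul _ (((hdf k) x).fun_mul ((hdh (n - k)) x)),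
        deriv_fun_mul ((hdf k) x) ((hdh (n - k)) x), iteratedDeriv_succ, iteratedDeriv_succ]
      ring
    rw [Finset.sum_congr rfl hsum, Finset.sum_add_distrib]
    -- reindex
    have e1 : ∑ k ∈ range (n + 1),
        (n.choose k : ℝ) * (iteratedDeriv (k + 1) f x * iteratedDeriv (n - k) h x)
        = ∑ k ∈ range (n + 1),
        (n.choose k : ℝ) * (iteratedDeriv (k + 1) f x * iteratedDeriv (n + 1 - (k + 1)) h x) := by
      apply Finset.sum_congr rfl; intro k hk; rw [mem_range] at hk
      congr 3; omega
    rw [e1]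
    rw [Finset.sum_range_succ' (fun k =>
      (((n+1).choose k : ℝ)) * (iteratedDeriv k f x * iteratedDeriv (n + 1 - k) h x)) (n + 1)]
    simp only [Nat.choose_zero_right, Nat.cast_one, one_mul, Nat.sub_zero]
    have e2 : ∑ k ∈ range (n + 1),
        ((n + 1).choose (k + 1) : ℝ) * (iteratedDeriv (k + 1) f x * iteratedDeriv (n + 1 - (k + 1)) h x)
        = ∑ k ∈ range (n + 1),
          ((n.choose k : ℝ) * (iteratedDeriv (k + 1) f x * iteratedDeriv (n + 1 - (k + 1)) h x)
            + (n.choose (k + 1) : ℝ) * (iteratedDeriv (k + 1) f x * iteratedDeriv (n + 1 - (k + 1)) h x)) := by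
      apply Finset.sum_congr rfl; intro k _
      rw [Nat.choose_succ_succ, Nat.cast_add]; ring
    rw [e2, Finset.sum_add_distrib]
    have e3 : ∑ k ∈ range (n + 1),
        (n.choose (k + 1) : ℝ) * (iteratedDeriv (k + 1) f x * iteratedDeriv (n + 1 - (k + 1)) h x)
        + iteratedDeriv 0 f x * iteratedDeriv (n + 1) h x
        = ∑ k ∈ range (n + 1),
        (n.choose k : ℝ) * (iteratedDeriv k f x * iteratedDeriv (n - k + 1) h x) := by
      have r1 : ∑ k ∈ range (n + 1),
          (n.choose k : ℝ) * (iteratedDeriv k f x * iteratedDeriv (n - k + 1) h x)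
          = ∑ k ∈ range (n + 1),
          (n.choose k : ℝ) * (iteratedDeriv k f x * iteratedDeriv (n + 1 - k) h x) := by
        apply Finset.sum_congr rfl; intro k hk; rw [mem_range] at hk
        congr 3; omega
      rw [r1, Finset.sum_range_succ' (fun k =>
        (n.choose k : ℝ) * (iteratedDeriv k f x * iteratedDeriv (n + 1 - k) h x)) n,
        Finset.sum_range_succ]
      simp [Nat.choose_succ_self]
    linarith [e3]

/-- If `g` is a Bernstein function (`g ≥ 0` on `(0,∞)` and `g'` completely monotone),
then `E ↦ exp (-g E)` is completely monotone on `(0,∞)`. -/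
theorem stmt1 (g : ℝ → ℝ)
    (hg : ContDiff ℝ (⊤ : ℕ∞) g)
    (hg0 : ∀ E > (0:ℝ), 0 ≤ g E)
    (hg' : ∀ (n : ℕ) (E : ℝ), 0 < E → 0 ≤ (-1:ℝ)^n * iteratedDeriv n (deriv g) E) :
    ∀ (n : ℕ) (E : ℝ), 0 < E →
      0 ≤ (-1:ℝ)^n * iteratedDeriv n (fun x => Real.exp (-g x)) E := by
  set f : ℝ → ℝ := fun x => Real.exp (-g x) with hfdef
  have hginf : ContDiff ℝ ∞ g := hg.of_le (by simp)
  have hf : ContDiff ℝ ∞ f := (Real.contDiff_exp.of_le le_top).comp hginf.neg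
  have hdg : Differentiable ℝ g := hginf.differentiable (by simp)
  have hg'c : ContDiff ℝ ∞ (deriv g) := (contDiff_infty_iff_deriv.mp hginf).2
  have hfder : deriv f = fun x => (-deriv g x) * f x := by
    funext x
    have : HasDerivAt f (Real.exp (-g x) * (-deriv g x)) x := by
      have h1 : HasDerivAt (fun y => -g y) (-deriv g x) x := (hdg x).hasDerivAt.neg
      exact h1.exp
    rw [this.deriv]; ring
  intro n
  induction n using Nat.strong_induction_on with
  | _ n IH =>
    match n with
    | 0 =>
      intro E _
      simp [iteratedDeriv_zero, hfdef, (Real.exp_pos _).le]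
    | n + 1 =>
      intro E hE
      rw [iteratedDeriv_succ', hfder]
      have := leibniz_iteratedDeriv (fun x => -deriv g x) f hg'c.neg hf n
      rw [show (fun x => -deriv g x * f x) = (fun x => (fun y => -deriv g y) x * f x) from rfl,
        this]
      rw [Finset.mul_sum]
      apply Finset.sum_nonneg
      intro k hk
      rw [mem_range] at hk
      have hknat : k ≤ n := by omega
      have h1 : iteratedDeriv k (fun y => -deriv g y) E = -iteratedDeriv k (deriv g) E := by
        have := iteratedDeriv_neg k (deriv g) E
        simpa using this
      have key : (-1:ℝ)^(n+1) * ((n.choose k : ℝ) *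
          (iteratedDeriv k (fun y => -deriv g y) E * iteratedDeriv (n - k) f E))
          = (n.choose k : ℝ) * (((-1:ℝ)^k * iteratedDeriv k (deriv g) E)
            * ((-1:ℝ)^(n-k) * iteratedDeriv (n - k) f E)) := by
        rw [h1]
        have : (-1:ℝ)^(n+1) = (-1:ℝ)^k * (-1:ℝ)^(n-k) * (-1:ℝ) := by
          rw [← pow_add, ← pow_succ]
          congr 1; omega
        rw [this]; ring
      rw [key]
      have h2 : 0 ≤ (-1:ℝ)^k * iteratedDeriv k (deriv g) E := hg' k E hE
      have h3 : 0 ≤ (-1:ℝ)^(n-k) * iteratedDeriv (n - k) f E := IH (n - k) (by omega) E hE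
      positivity
end
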